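/- arXiv:0711.3049 — 4 statements merged into one kernel-verified Lean document; each statement's English description precedes it below -/
import Mathlib

section
/- Let A be an n×n Hermitian matrix, x ∈ ℂⁿ, and c a nonzero real number. If c > 0 then π(A + c·x·x*) ≤ π(A) + 1 and ν(A + c·x·x*) ≤ ν(A); if c < 0 then ν(A + c·x·x*) ≤ ν(A) + 1 and π(A + c·x·x*) ≤ π(A). -/
open Matrix

/-- Number of positive eigenvalues (with multiplicity) of a Hermitian matrix. -/
noncomputable def posIn {m : ℕ} {A : Matrix (Fin m) (Fin m) ℂ} (hA : A.IsHermitian) : ℕ :=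
  Finset.card (Finset.univ.filter fun i => 0 < hA.eigenvalues i)

/-- Number of negative eigenvalues (with multiplicity) of a Hermitian matrix. -/
noncomputable def negIn {m : ℕ} {A : Matrix (Fin m) (Fin m) ℂ} (hA : A.IsHermitian) : ℕ :=
  Finset.card (Finset.univ.filter fun i => hA.eigenvalues i < 0)

/-!
In an orthonormal eigenbasis the quadratic form `v ↦ Re ⟪v, B v⟫` of a Hermitian matrix `B` is
`∑ λᵢ |vᵢ|²`. Hence, for a real `σ`, the number of eigenvalues with `σ λ > 0` is the largest
dimension of a subspace on which `σ ⟪v, B v⟫` is positive definite (`σ = ±1` gives `π` and `ν`).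
Adding `c • x xᴴ` adds `c |⟪x, v⟫|²` to the form. On the hyperplane `xᗮ` nothing changes, and
passing to it costs at most one dimension; when `σ c ≤ 0` the form `σ ⟪v, B v⟫` can only decrease,
so no dimension is lost.
-/

open Module Finset
open scoped InnerProductSpace

variable {𝕜 : Type*} [RCLike 𝕜] {ι : Type*} [Fintype ι] [DecidableEq ι]

noncomputable def quadForm (B : Matrix ι ι 𝕜) (v : EuclideanSpace 𝕜 ι) : ℝ :=
  RCLike.re ⟪v, B.toEuclideanLin v⟫_𝕜

omit [DecidableEq ι] in
lemma OrthonormalBasis.repr_eq_zero_of_mem_span_image {E : Type*} [NormedAddCommGroup E]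
    [InnerProductSpace 𝕜 E] (b : OrthonormalBasis ι 𝕜 E) {s : Set ι} {v : E}
    (hv : v ∈ Submodule.span 𝕜 (b '' s)) {i : ι} (hi : i ∉ s) : b.repr v i = 0 := by
  rw [← b.coe_toBasis, Basis.mem_span_image] at hv
  simpa using mt (@hv i) hi

omit [DecidableEq ι] in
lemma OrthonormalBasis.finrank_span_image {E : Type*} [NormedAddCommGroup E]
    [InnerProductSpace 𝕜 E] (b : OrthonormalBasis ι 𝕜 E) (s : Finset ι) :
    finrank 𝕜 (Submodule.span 𝕜 (b '' s)) = #s := by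
  have hli : LinearIndependent 𝕜 fun i : (s : Set ι) => b i :=
    b.orthonormal.linearIndependent.comp _ Subtype.val_injective
  rw [Set.image_eq_range, finrank_span_eq_card hli]
  simp

lemma toEuclideanLin_vecMulVec_star (x : ι → 𝕜) (v : EuclideanSpace 𝕜 ι) :
    (vecMulVec x (star x)).toEuclideanLin v = ⟪WithLp.toLp 2 x, v⟫_𝕜 • WithLp.toLp 2 x := by
  apply WithLp.ofLp_injective
  rw [Matrix.ofLp_toLpLin, toLin'_apply, vecMulVec_mulVec, op_smul_eq_smul, WithLp.ofLp_smul,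
    EuclideanSpace.inner_eq_star_dotProduct, dotProduct_comm]

lemma quadForm_add_smul_vecMulVec (A : Matrix ι ι 𝕜) (x : ι → 𝕜) (c : ℝ)
    (v : EuclideanSpace 𝕜 ι) :
    quadForm (A + c • vecMulVec x (star x)) v =
      quadForm A v + c * ‖⟪WithLp.toLp 2 x, v⟫_𝕜‖ ^ 2 := by
  rw [quadForm, quadForm, RCLike.real_smul_eq_coe_smul (K := 𝕜), map_add, map_smul,
    LinearMap.add_apply, LinearMap.smul_apply, toEuclideanLin_vecMulVec_star, inner_add_right,
    inner_smul_right, inner_smul_right, ← inner_conj_symm v (WithLp.toLp 2 x), RCLike.mul_conj,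
    map_add, ← RCLike.ofReal_pow, ← RCLike.ofReal_mul, RCLike.ofReal_re]

namespace Matrix.IsHermitian

variable {B : Matrix ι ι 𝕜} (hB : B.IsHermitian)
include hB

lemma toEuclideanLin_eigenvectorBasis (i : ι) :
    B.toEuclideanLin (hB.eigenvectorBasis i) =
      (hB.eigenvalues i : 𝕜) • hB.eigenvectorBasis i := by
  apply WithLp.ofLp_injective
  rw [Matrix.ofLp_toLpLin, toLin'_apply, hB.mulVec_eigenvectorBasis, WithLp.ofLp_smul,
    RCLike.real_smul_eq_coe_smul (K := 𝕜)]

lemma repr_toEuclideanLin (v : EuclideanSpace 𝕜 ι) (i : ι) :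
    hB.eigenvectorBasis.repr (B.toEuclideanLin v) i =
      hB.eigenvalues i * hB.eigenvectorBasis.repr v i := by
  rw [OrthonormalBasis.repr_apply_apply, OrthonormalBasis.repr_apply_apply,
    ← (isSymmetric_toEuclideanLin_iff.mpr hB), hB.toEuclideanLin_eigenvectorBasis,
    inner_smul_left, RCLike.conj_ofReal]

lemma quadForm_eq_sum (v : EuclideanSpace 𝕜 ι) :
    quadForm B v = ∑ i, hB.eigenvalues i * ‖hB.eigenvectorBasis.repr v i‖ ^ 2 := by
  rw [quadForm, ← hB.eigenvectorBasis.repr.inner_map_map, PiLp.inner_apply, map_sum]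
  refine Finset.sum_congr rfl fun i _ => ?_
  rw [hB.repr_toEuclideanLin, RCLike.inner_apply, mul_assoc, RCLike.mul_conj, ← RCLike.ofReal_pow,
    RCLike.re_ofReal_mul, RCLike.ofReal_re]

noncomputable def signCount (σ : ℝ) : ℕ := #{i | 0 < σ * hB.eigenvalues i}

lemma mul_quadForm_pos_of_mem_span {σ : ℝ} {s : Set ι} (hs : ∀ i ∈ s, 0 < σ * hB.eigenvalues i)
    {v : EuclideanSpace 𝕜 ι} (hv : v ∈ Submodule.span 𝕜 (hB.eigenvectorBasis '' s))
    (hv0 : v ≠ 0) : 0 < σ * quadForm B v := by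
  have hzero : ∀ i ∉ s, hB.eigenvectorBasis.repr v i = 0 :=
    fun i hi => hB.eigenvectorBasis.repr_eq_zero_of_mem_span_image hv hi
  obtain ⟨i₀, hi₀⟩ : ∃ i, hB.eigenvectorBasis.repr v i ≠ 0 := by
    by_contra! h
    exact hv0 (hB.eigenvectorBasis.repr.map_eq_zero_iff.mp (by ext i; exact h i))
  have hi₀s : i₀ ∈ s := by_contra fun h => hi₀ (hzero i₀ h)
  rw [hB.quadForm_eq_sum, Finset.mul_sum]
  refine Finset.sum_pos' (fun i _ => ?_) ⟨i₀, mem_univ _, ?_⟩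
  · by_cases hi : i ∈ s
    · rw [← mul_assoc]; exact mul_nonneg (hs i hi).le (sq_nonneg _)
    · simp [hzero i hi]
  · rw [← mul_assoc]; exact mul_pos (hs i₀ hi₀s) (by positivity)

lemma mul_quadForm_nonpos_of_mem_span {σ : ℝ} {s : Set ι}
    (hs : ∀ i ∈ s, σ * hB.eigenvalues i ≤ 0) {v : EuclideanSpace 𝕜 ι}
    (hv : v ∈ Submodule.span 𝕜 (hB.eigenvectorBasis '' s)) : σ * quadForm B v ≤ 0 := by
  rw [hB.quadForm_eq_sum, Finset.mul_sum]
  refine Finset.sum_nonpos fun i _ => ?_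
  by_cases hi : i ∈ s
  · rw [← mul_assoc]; exact mul_nonpos_of_nonpos_of_nonneg (hs i hi) (sq_nonneg _)
  · simp [hB.eigenvectorBasis.repr_eq_zero_of_mem_span_image hv hi]

lemma exists_finrank_eq_signCount (σ : ℝ) :
    ∃ W : Submodule 𝕜 (EuclideanSpace 𝕜 ι), finrank 𝕜 W = hB.signCount σ ∧
      ∀ v ∈ W, v ≠ 0 → 0 < σ * quadForm B v :=
  ⟨_, hB.eigenvectorBasis.finrank_span_image _,
    fun _ hv hv0 => hB.mul_quadForm_pos_of_mem_span (fun i hi => by simpa using hi) hv hv0⟩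

lemma finrank_le_signCount {σ : ℝ} (W : Submodule 𝕜 (EuclideanSpace 𝕜 ι))
    (hW : ∀ v ∈ W, v ≠ 0 → 0 < σ * quadForm B v) : finrank 𝕜 W ≤ hB.signCount σ := by
  set s : Finset ι := {i | 0 < σ * hB.eigenvalues i}
  set N := Submodule.span 𝕜 (hB.eigenvectorBasis '' ↑sᶜ)
  have hWN : W ⊓ N = ⊥ := by
    refine (Submodule.eq_bot_iff _).mpr fun v hv => by_contra fun hv0 => ?_
    have hN := hB.mul_quadForm_nonpos_of_mem_span (fun i hi => by simpa [s] using hi) hv.2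
    exact (hW v hv.1 hv0).not_ge hN
  have hsum := Submodule.finrank_sup_add_finrank_inf_eq W N
  have hsup := Submodule.finrank_le (W ⊔ N)
  rw [hWN, finrank_bot, hB.eigenvectorBasis.finrank_span_image, card_compl] at hsum
  rw [finrank_euclideanSpace] at hsup
  have hs := card_le_univ s
  show finrank 𝕜 W ≤ #s
  omega

lemma signCount_le_add_of_codim_le {B' : Matrix ι ι 𝕜} (hB' : B'.IsHermitian) (σ : ℝ)
    {k : ℕ} (K : Submodule 𝕜 (EuclideanSpace 𝕜 ι)) (hKdim : Fintype.card ι ≤ finrank 𝕜 K + k)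
    (hK : ∀ v ∈ K, σ * quadForm B' v ≤ σ * quadForm B v) :
    hB'.signCount σ ≤ hB.signCount σ + k := by
  obtain ⟨W, hWdim, hW⟩ := hB'.exists_finrank_eq_signCount σ
  have hWK := hB.finrank_le_signCount (W ⊓ K)
    fun v hv hv0 => (hW v hv.1 hv0).trans_le (hK v hv.2)
  have hsum := Submodule.finrank_sup_add_finrank_inf_eq W K
  have hsup := Submodule.finrank_le (W ⊔ K)
  rw [finrank_euclideanSpace] at hsup
  omega

lemma signCount_add_smul_vecMulVec_le {x : ι → 𝕜} {c : ℝ}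
    (hM : (B + c • vecMulVec x (star x)).IsHermitian) (σ : ℝ) :
    hM.signCount σ ≤ hB.signCount σ + 1 := by
  have hK : ∀ v ∈ (𝕜 ∙ WithLp.toLp 2 x)ᗮ,
      σ * quadForm (B + c • vecMulVec x (star x)) v ≤ σ * quadForm B v := by
    intro v hv
    rw [quadForm_add_smul_vecMulVec, Submodule.mem_orthogonal_singleton_iff_inner_right.mp hv]
    simp
  have hKdim : Fintype.card ι ≤ finrank 𝕜 (𝕜 ∙ WithLp.toLp 2 x)ᗮ + 1 := by
    have hsum := (𝕜 ∙ WithLp.toLp 2 x).finrank_add_finrank_orthogonal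
    have hline : finrank 𝕜 (𝕜 ∙ WithLp.toLp 2 x) ≤ 1 := (finrank_span_le_card _).trans (by simp)
    rw [finrank_euclideanSpace] at hsum
    omega
  exact hB.signCount_le_add_of_codim_le hM σ _ hKdim hK

lemma signCount_add_smul_vecMulVec_le_of_mul_nonpos {x : ι → 𝕜} {c : ℝ}
    (hM : (B + c • vecMulVec x (star x)).IsHermitian) (σ : ℝ) (hσc : σ * c ≤ 0) :
    hM.signCount σ ≤ hB.signCount σ := by
  refine hB.signCount_le_add_of_codim_le hM σ (k := 0) ⊤ (by simp) fun v _ => ?_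
  rw [quadForm_add_smul_vecMulVec]
  linarith [mul_nonpos_of_nonpos_of_nonneg hσc (sq_nonneg ‖⟪WithLp.toLp 2 x, v⟫_𝕜‖)]

end Matrix.IsHermitian

lemma posIn_eq_signCount {m : ℕ} {A : Matrix (Fin m) (Fin m) ℂ} (hA : A.IsHermitian) :
    posIn hA = hA.signCount 1 := by
  simp [posIn, Matrix.IsHermitian.signCount]

lemma negIn_eq_signCount {m : ℕ} {A : Matrix (Fin m) (Fin m) ℂ} (hA : A.IsHermitian) :
    negIn hA = hA.signCount (-1) := by
  simp [negIn, Matrix.IsHermitian.signCount]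

theorem stmt2_general {n : ℕ} (A : Matrix (Fin n) (Fin n) ℂ) (hA : A.IsHermitian)
    (x : Fin n → ℂ) (c : ℝ)
    (M : Matrix (Fin n) (Fin n) ℂ)
    (hMdef : M = A + c • Matrix.vecMulVec x (star x)) (hM : M.IsHermitian) :
    (0 < c → posIn hM ≤ posIn hA + 1 ∧ negIn hM ≤ negIn hA) ∧
      (c < 0 → negIn hM ≤ negIn hA + 1 ∧ posIn hM ≤ posIn hA) := by
  subst hMdef
  simp only [posIn_eq_signCount, negIn_eq_signCount]
  exact ⟨fun hc => ⟨hA.signCount_add_smul_vecMulVec_le hM 1,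
      hA.signCount_add_smul_vecMulVec_le_of_mul_nonpos hM (-1) (by linarith)⟩,
    fun hc => ⟨hA.signCount_add_smul_vecMulVec_le hM (-1),
      hA.signCount_add_smul_vecMulVec_le_of_mul_nonpos hM 1 (by linarith)⟩⟩

/-- Adding a Hermitian rank-one matrix c·x·x* increases π by at most one (if c > 0)
and leaves ν unchanged or smaller, and symmetrically for c < 0. -/
theorem stmt2 {n : ℕ} (A : Matrix (Fin n) (Fin n) ℂ) (hA : A.IsHermitian)
    (x : Fin n → ℂ) (c : ℝ) (hc : c ≠ 0)
    (M : Matrix (Fin n) (Fin n) ℂ)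
    (hMdef : M = A + c • Matrix.vecMulVec x (star x)) (hM : M.IsHermitian) :
    (0 < c → posIn hM ≤ posIn hA + 1 ∧ negIn hM ≤ negIn hA) ∧
      (c < 0 → negIn hM ≤ negIn hA + 1 ∧ posIn hM ≤ posIn hA) :=
  stmt2_general A hA x c M hMdef hM
end

section
/- Let T be a tree on n vertices and let S ⊆ V(T) with |S| = k. Then the forest T − S has exactly |E_T(S)| − k + 1 connected components, and consequently f_T(S) := |E_T(S)| − 2k + 1 ≤ M_k(T) − k, with equality achieved for some S of size k. -/
/-!
Removing `S` from the tree `T` deletes exactly the edges `E_T(S)`, so `T - S` is a forest on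
`n - k` vertices with `n - 1 - |E_T(S)|` edges. Every edge of a forest is a bridge, and deleting a
bridge creates exactly one new component, so a forest has `#vertices - #edges` components. This
gives `|E_T(S)| - k + 1` components, i.e. `f_T(S) = c(T - S) - k`, and maximizing `f_T` over
`k`-sets is the same as maximizing the number of components of `T - S`.
-/

open Matrix

/-- The maximal disconnection of `G` by `k` vertices: the maximum number of
connected components of an induced subgraph of `G` on `n - k` vertices. -/
noncomputable def MD {n : ℕ} (G : SimpleGraph (Fin n)) (k : ℕ) : ℕ :=
  Finset.sup (Finset.univ.filter fun s : Finset (Fin n) => s.card = n - k)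
    fun s => Nat.card (SimpleGraph.induce (↑s : Set (Fin n)) G).ConnectedComponent

/-- The set of edges of `G` incident to at least one vertex of `S`. -/
def ETset {n : ℕ} (G : SimpleGraph (Fin n)) (S : Finset (Fin n)) : Set (Sym2 (Fin n)) :=
  {e ∈ G.edgeSet | ∃ v ∈ S, v ∈ e}

/-- f_G(S) = |E_G(S)| − 2|S| + 1. -/
noncomputable def fT {n : ℕ} (G : SimpleGraph (Fin n)) (S : Finset (Fin n)) : ℤ :=
  ((ETset G S).ncard : ℤ) - 2 * S.card + 1

namespace SimpleGraph

variable {V : Type*} {G : SimpleGraph V}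

lemma image_edgeSet_induce (s : Set V) :
    Sym2.map (↑) '' (G.induce s).edgeSet = {e ∈ G.edgeSet | ∀ v ∈ e, v ∈ s} := by
  ext e
  induction e with | h a b => ?_
  aesop (add simp [adj_comm, Sym2.exists])

lemma card_edgeSet_induce (s : Set V) :
    Nat.card (G.induce s).edgeSet = {e ∈ G.edgeSet | ∀ v ∈ e, v ∈ s}.ncard := by
  rw [← image_edgeSet_induce, Nat.card_coe_set_eq,
    Set.ncard_image_of_injective _ (Sym2.map.injective Subtype.val_injective)]

lemma Reachable.deleteEdges_singleton_cases {a b : V} (h : G.Reachable a b) (v w : V) :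
    (G.deleteEdges {s(v, w)}).Reachable a b ∨
      ((G.deleteEdges {s(v, w)}).Reachable a v ∧ (G.deleteEdges {s(v, w)}).Reachable w b) ∨
      ((G.deleteEdges {s(v, w)}).Reachable a w ∧ (G.deleteEdges {s(v, w)}).Reachable v b) := by
  obtain ⟨p⟩ := h
  induction p with
  | nil => exact .inl .rfl
  | @cons a x b hax q ih =>
    by_cases he : s(a, x) = s(v, w)
    · rcases Sym2.eq_iff.mp he with ⟨rfl, rfl⟩ | ⟨rfl, rfl⟩ <;>
        rcases ih with h | ⟨h₁, h₂⟩ | ⟨h₁, h₂⟩ <;> simp_all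
    · have hax' : (G.deleteEdges {s(v, w)}).Reachable a x :=
        (deleteEdges_adj.mpr ⟨hax, he⟩).reachable
      rcases ih with h | ⟨h₁, h₂⟩ | ⟨h₁, h₂⟩
      · exact .inl (hax'.trans h)
      · exact .inr (.inl ⟨hax'.trans h₁, h₂⟩)
      · exact .inr (.inr ⟨hax'.trans h₁, h₂⟩)

variable {v w : V}

lemma IsBridge.card_connectedComponent_deleteEdges [Finite V] (hvw : G.Adj v w)
    (hsep : G.IsBridge s(v, w)) :
    Nat.card (G.deleteEdges {s(v, w)}).ConnectedComponent = Nat.card G.ConnectedComponent + 1 := by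
  set G' := G.deleteEdges {s(v, w)}
  set φ := ConnectedComponent.map (Hom.ofLE (deleteEdges_le {s(v, w)}))
  -- `φ` merges the components of `v` and `w` and nothing else, so it is a bijection off `[w]`.
  set s : Set G'.ConnectedComponent := {G'.connectedComponentMk w}ᶜ
  have hinj : s.InjOn φ := by
    intro c₁ hc₁ c₂ hc₂ heq
    induction c₁ using ConnectedComponent.ind with | h a => ?_
    induction c₂ using ConnectedComponent.ind with | h b => ?_
    rcases (ConnectedComponent.exact heq).deleteEdges_singleton_cases v w with
      hab | ⟨-, hwb⟩ | ⟨haw, -⟩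
    · exact ConnectedComponent.sound hab
    · exact absurd (ConnectedComponent.sound hwb.symm) hc₂
    · exact absurd (ConnectedComponent.sound haw) hc₁
  have himage : φ '' s = Set.univ := by
    refine Set.eq_univ_of_forall fun c => ?_
    obtain ⟨c', rfl⟩ := ConnectedComponent.surjective_map_ofLE (deleteEdges_le {s(v, w)}) c
    by_cases hc' : c' = G'.connectedComponentMk w
    · refine ⟨G'.connectedComponentMk v, fun hv => hsep (ConnectedComponent.exact hv), ?_⟩
      rw [hc']
      exact ConnectedComponent.sound hvw.reachable
    · exact ⟨c', hc', rfl⟩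
  have : Nonempty G'.ConnectedComponent := ⟨G'.connectedComponentMk w⟩
  have hpos : 0 < Nat.card G'.ConnectedComponent := Nat.card_pos
  have hcard : Nat.card G.ConnectedComponent = Nat.card G'.ConnectedComponent - 1 := by
    rw [← Set.ncard_univ, ← himage, hinj.ncard_image, Set.ncard_compl, Set.ncard_singleton]
  omega

lemma IsAcyclic.card_connectedComponent_add_card_edgeSet [Finite V] (hG : G.IsAcyclic) :
    Nat.card G.ConnectedComponent + Nat.card G.edgeSet = Nat.card V := by
  induction hm : Nat.card G.edgeSet generalizing G with
  | zero =>
    have hbot : G = ⊥ := edgeSet_eq_empty.mp <| Set.isEmpty_coe_sort.mp <|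
      (Nat.card_eq_zero.mp hm).resolve_right (not_infinite_iff_finite.mpr inferInstance)
    subst hbot
    exact Nat.card_eq_of_bijective _
      ⟨fun a b hab => reachable_bot.mp (ConnectedComponent.exact hab),
        fun c => c.exists_rep⟩ |>.symm
  | succ m ih =>
    obtain ⟨e, he⟩ : G.edgeSet.Nonempty := by
      rw [← Set.nonempty_coe_sort, ← Nat.card_pos_iff.trans (and_iff_left inferInstance)]
      omega
    induction e with | h v w => ?_
    have hbridge : G.IsBridge s(v, w) := isAcyclic_iff_forall_isBridge.mp hG he
    have hcard : Nat.card (G.deleteEdges {s(v, w)}).edgeSet = m := by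
      rw [edgeSet_deleteEdges, Nat.card_coe_set_eq, Set.ncard_sdiff_singleton_of_mem he,
        ← Nat.card_coe_set_eq, hm, Nat.add_sub_cancel]
    rw [← ih (hG.anti (deleteEdges_le _)) hcard, hbridge.card_connectedComponent_deleteEdges he]
    ring

end SimpleGraph

open SimpleGraph

section
variable {n : ℕ}

lemma ncard_ETset_add_card_edgeSet_induce_compl (G : SimpleGraph (Fin n)) (S : Finset (Fin n)) :
    (ETset G S).ncard + Nat.card (G.induce ↑Sᶜ).edgeSet = Nat.card G.edgeSet := by
  have hE : ETset G S =
      G.edgeSet \ {e ∈ G.edgeSet | ∀ v ∈ e, v ∈ (↑Sᶜ : Set (Fin n))} := by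
    ext e
    simp [ETset, and_comm]
  rw [card_edgeSet_induce, hE, Set.ncard_sdiff_add_ncard_of_subset (Set.sep_subset _ _),
    Nat.card_coe_set_eq]

theorem SimpleGraph.IsTree.card_connectedComponent_induce_compl {T : SimpleGraph (Fin n)}
    (hT : T.IsTree) (S : Finset (Fin n)) :
    Nat.card (T.induce ↑Sᶜ).ConnectedComponent + S.card = (ETset T S).ncard + 1 := by
  have hforest := (hT.isAcyclic.induce ↑Sᶜ).card_connectedComponent_add_card_edgeSet
  have hedges := ncard_ETset_add_card_edgeSet_induce_compl T S
  have htree := (isTree_iff_connected_and_card.mp hT).2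
  have hverts : Nat.card (↑Sᶜ : Set (Fin n)) + S.card = n := by
    rw [Nat.card_coe_set_eq, Set.ncard_coe_finset, Finset.card_compl_add_card, Fintype.card_fin]
  simp only [Nat.card_eq_fintype_card, Fintype.card_fin] at htree
  omega

lemma fT_eq_of_isTree {T : SimpleGraph (Fin n)} (hT : T.IsTree) (S : Finset (Fin n)) :
    fT T S = Nat.card (T.induce ↑Sᶜ).ConnectedComponent - S.card := by
  have := hT.card_connectedComponent_induce_compl S
  unfold fT
  omega

lemma card_connectedComponent_induce_le_MD (G : SimpleGraph (Fin n)) {k : ℕ}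
    {s : Finset (Fin n)} (hs : s.card = n - k) :
    Nat.card (G.induce ↑s).ConnectedComponent ≤ MD G k :=
  Finset.le_sup (f := fun s : Finset (Fin n) => Nat.card (G.induce ↑s).ConnectedComponent)
    (by simp [hs])

lemma exists_card_connectedComponent_induce_eq_MD (G : SimpleGraph (Fin n)) (k : ℕ) :
    ∃ s : Finset (Fin n),
      s.card = n - k ∧ Nat.card (G.induce ↑s).ConnectedComponent = MD G k := by
  obtain ⟨s₀, -, hs₀⟩ := (Finset.univ : Finset (Fin n)).exists_subset_card_eq
    (n := n - k) (by simp)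
  have hne : (Finset.univ.filter fun s : Finset (Fin n) => s.card = n - k).Nonempty :=
    ⟨s₀, by simp [hs₀]⟩
  obtain ⟨s, hs, hmax⟩ := Finset.exists_mem_eq_sup _ hne
    (fun s : Finset (Fin n) => Nat.card (G.induce ↑s).ConnectedComponent)
  exact ⟨s, (Finset.mem_filter.mp hs).2, hmax.symm⟩

end

/-- For a tree T and S ⊆ V(T) with |S| = k, the forest T − S has exactly
|E_T(S)| − k + 1 components; hence f_T(S) ≤ M_k(T) − k, with equality for
some S of size k. -/
theorem stmt12 {n k : ℕ} (T : SimpleGraph (Fin n)) (hT : T.IsTree) (hk : k ≤ n) :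
    (∀ S : Finset (Fin n), S.card = k →
        (Nat.card (SimpleGraph.induce (↑(Sᶜ) : Set (Fin n)) T).ConnectedComponent : ℤ)
            = ((ETset T S).ncard : ℤ) - k + 1 ∧
          fT T S ≤ (MD T k : ℤ) - k) ∧
      ∃ S : Finset (Fin n), S.card = k ∧ fT T S = (MD T k : ℤ) - k := by
  have hcompl {S : Finset (Fin n)} {m : ℕ} (hS : S.card = m) : Sᶜ.card = n - m := by
    rw [Finset.card_compl, Fintype.card_fin, hS]
  refine ⟨fun S hS => ⟨?_, ?_⟩, ?_⟩
  · have := hT.card_connectedComponent_induce_compl S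
    omega
  · have := card_connectedComponent_induce_le_MD T (hcompl hS)
    rw [fT_eq_of_isTree hT, hS]
    omega
  · obtain ⟨s, hs, hmax⟩ := exists_card_connectedComponent_induce_eq_MD T k
    have hsc : sᶜ.card = k := by rw [hcompl hs]; omega
    refine ⟨sᶜ, hsc, ?_⟩
    rw [fT_eq_of_isTree hT, compl_compl, hmax, hsc]
end

section
/- Let T be a tree that is not a star and has maximum degree at least 3. Then there exists a vertex v of T having exactly one non-pendant neighbor and at least one pendant neighbor. -/
/-- `G` is a star: some center vertex is adjacent to every other vertex, and
there are no other edges. -/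
def IsStar {V : Type*} (G : SimpleGraph V) : Prop :=
  ∃ c : V, ∀ v w : V, G.Adj v w ↔ (v = c ∨ w = c) ∧ v ≠ w

open SimpleGraph Walk

section Aux

variable {V : Type*} [DecidableEq V] {G : SimpleGraph V}

private lemma concat_isPath {u v w : V} {p : G.Walk u v} (hp : p.IsPath) (h : G.Adj v w)
    (hw : w ∉ p.support) : (p.concat h).IsPath := by
  rw [← isPath_reverse_iff, reverse_concat]
  exact hp.reverse.cons (by simpa using hw)

private lemma tree_path_length (hT : G.IsTree) {u v : V} (p : G.Walk u v) (hp : p.IsPath) :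
    p.length = G.dist u v := by
  obtain ⟨q, hq, hql⟩ := hT.isConnected.exists_path_of_dist u v
  rw [(hT.existsUnique_path u v).unique hp hq, hql]

private lemma dist_ne_of_adj (hT : G.IsTree) {r v w : V} (h : G.Adj v w) :
    G.dist r w ≠ G.dist r v := by
  intro he
  obtain ⟨p, hp, hpl⟩ := hT.isConnected.exists_path_of_dist r w
  by_cases hv : v ∈ p.support
  · have h1 : (p.takeUntil v hv).length = G.dist r v :=
      tree_path_length hT _ (hp.takeUntil hv)
    have h2 := congrArg Walk.length (p.take_spec hv)
    rw [length_append] at h2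
    have h3 : (p.dropUntil v hv).length = 0 := by omega
    exact h.ne (eq_of_length_eq_zero h3)
  · have h4 := tree_path_length hT _ (concat_isPath hp h.symm hv)
    rw [length_concat] at h4
    omega

private lemma parent_unique (hT : G.IsTree) {r v w1 w2 : V} (h1 : G.Adj v w1) (h2 : G.Adj v w2)
    (hd1 : G.dist r w1 < G.dist r v) (hd2 : G.dist r w2 < G.dist r v) : w1 = w2 := by
  obtain ⟨p1, hp1, hl1⟩ := hT.isConnected.exists_path_of_dist r w1
  obtain ⟨p2, hp2, hl2⟩ := hT.isConnected.exists_path_of_dist r w2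
  have hv1 : v ∉ p1.support := by
    intro hv
    have := tree_path_length hT _ (hp1.takeUntil hv)
    have hle := length_takeUntil_le p1 hv
    omega
  have hv2 : v ∉ p2.support := by
    intro hv
    have := tree_path_length hT _ (hp2.takeUntil hv)
    have hle := length_takeUntil_le p2 hv
    omega
  have hq1 := concat_isPath hp1 h1.symm hv1
  have hq2 := concat_isPath hp2 h2.symm hv2
  have heq := (hT.existsUnique_path r v).unique hq1 hq2
  obtain ⟨hv, -⟩ := concat_inj heq
  exact hv

end Aux

/-- A tree that is not a star with maximum degree at least 3 has a vertex with a
unique non-pendant neighbor and at least one pendant neighbor. -/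
theorem stmt13 {n : ℕ} (T : SimpleGraph (Fin n)) [DecidableRel T.Adj]
    (hT : T.IsTree) (hstar : ¬ IsStar T) (hdeg : 3 ≤ T.maxDegree) :
    ∃ v : Fin n, (∃! w : Fin n, T.Adj v w ∧ T.degree w ≠ 1) ∧
      ∃ u : Fin n, T.Adj v u ∧ T.degree u = 1 := by
  classical
  have hne : Nonempty (Fin n) := by
    by_contra h
    have := T.maxDegree_le_of_forall_degree_le 0 (fun v => (h ⟨v⟩).elim)
    omega
  obtain ⟨x, hx⟩ := T.exists_maximal_degree_vertex
  have hxdeg : 3 ≤ T.degree x := hx ▸ hdeg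
  -- everything adjacent to a degree-1 vertex restricts paths
  have hdeg2 : ∀ {a b c : Fin n}, T.Adj a b → T.Adj a c → b ≠ c → 2 ≤ T.degree a := by
    intro a b c hab hac hbc
    have hsub : ({b, c} : Finset (Fin n)) ⊆ T.neighborFinset a := by
      intro y hy
      simp only [Finset.mem_insert, Finset.mem_singleton] at hy
      rcases hy with rfl | rfl <;> simp [SimpleGraph.mem_neighborFinset, hab, hac]
    calc 2 = ({b, c} : Finset (Fin n)).card := (Finset.card_pair hbc).symm
      _ ≤ (T.neighborFinset a).card := Finset.card_le_card hsub
      _ = T.degree a := rfl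
  -- S : non-pendant vertices
  set S : Finset (Fin n) := Finset.univ.filter (fun v => T.degree v ≠ 1) with hS
  have hxS : x ∈ S := by simp [hS]; omega
  obtain ⟨v, hvS, hvmax⟩ := S.exists_max_image (fun v => T.dist x v) ⟨x, hxS⟩
  have hvdeg : T.degree v ≠ 1 := by simpa [hS] using hvS
  -- every non-pendant neighbor of v is strictly closer to x
  have hclose : ∀ w : Fin n, T.Adj v w → T.degree w ≠ 1 → T.dist x w < T.dist x v := by
    intro w hw hwd
    have hle : T.dist x w ≤ T.dist x v := hvmax w (by simp [hS, hwd])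
    exact lt_of_le_of_ne hle (dist_ne_of_adj hT hw)
  -- v has a neighbor: connectivity
  have hntriv : Nontrivial (Fin n) := by
    have := T.degree_lt_card_verts x
    rw [Fintype.card_fin] at this
    exact Fin.nontrivial_iff_two_le.2 (by omega)
  have hnbr : ∃ u, T.Adj v u := by
    obtain ⟨y, hy⟩ := exists_ne v
    have hr := hT.isConnected.preconnected v y
    obtain ⟨p⟩ := hr
    cases p with
    | nil => exact absurd rfl hy.symm
    | cons h q => exact ⟨_, h⟩
  -- existence of a non-pendant neighbor (else star)
  have hexist : ∃ w, T.Adj v w ∧ T.degree w ≠ 1 := by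
    by_contra hall
    push_neg at hall
    have hadj : ∀ y : Fin n, y ≠ v → T.Adj v y := by
      intro y hy
      obtain ⟨p, hp, -⟩ := hT.isConnected.exists_path_of_dist v y
      cases p with
      | nil => exact absurd rfl hy
      | @cons _ u _ h q =>
        rw [cons_isPath_iff] at hp
        by_cases huy : u = y
        · exact huy ▸ h
        · exfalso
          cases q with
          | nil => exact huy rfl
          | @cons _ u' _ h' q' =>
            have hu'v : u' ≠ v := by
              intro hc
              exact hp.2 (by rw [← hc]; simp [support_cons])
            have : 2 ≤ T.degree u := hdeg2 h.symm h' hu'v.symm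
            have := hall u h
            omega
    apply hstar
    refine ⟨v, fun a b => ?_⟩
    constructor
    · intro hab
      refine ⟨?_, hab.ne⟩
      by_contra hc
      push_neg at hc
      obtain ⟨ha, hb⟩ := hc
      have h1 : T.Adj v a := hadj a ha
      have h2 : 2 ≤ T.degree a := hdeg2 h1.symm hab (fun hc => hb hc.symm)
      have := hall a h1
      omega
    · rintro ⟨hor, hne⟩
      rcases hor with h | h
      · subst h; exact hadj b hne.symm
      · subst h; exact (hadj a hne).symm
  obtain ⟨w, hvw, hwd⟩ := hexist
  -- v has degree ≥ 2
  have hv2 : 2 ≤ T.degree v := by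
    have h1 : 1 ≤ T.degree v := by
      obtain ⟨u, hu⟩ := hnbr
      have : u ∈ T.neighborFinset v := by simp [SimpleGraph.mem_neighborFinset, hu]
      exact Finset.card_pos.2 ⟨u, this⟩
    omega
  refine ⟨v, ⟨w, ⟨hvw, hwd⟩, ?_⟩, ?_⟩
  · rintro w' ⟨hvw', hwd'⟩
    exact parent_unique hT hvw' hvw (hclose w' hvw' hwd') (hclose w hvw hwd)
  · obtain ⟨u, hu, huw⟩ := Finset.exists_mem_ne hv2 w
    rw [SimpleGraph.mem_neighborFinset] at hu
    refine ⟨u, hu, ?_⟩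
    by_contra hud
    exact huw (parent_unique hT hu hvw (hclose u hu hud) (hclose w hvw hwd))
end

section
/- Let T be a tree in which some vertex v is adjacent to m ≥ 2 pendant vertices u₁,…,u_m and at most one non-pendant vertex, and let T₁ = T − {u₁,…,u_m,v}. Then P(T) = P(T₁) + m − 1. -/
open Matrix

/-- `s` induces a path in `G` (possibly a one-vertex or empty path). -/
def IsPathSet {V : Type*} [Fintype V] [DecidableEq V] (G : SimpleGraph V) (s : Finset V) : Prop :=
  ∃ m : ℕ, Nonempty ((SimpleGraph.induce (↑s : Set V) G) ≃g SimpleGraph.pathGraph m)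

/-- The path cover number: the minimum number of vertex-disjoint induced paths
covering all vertices of `G`. -/
noncomputable def pathCoverNumber {V : Type*} [Fintype V] [DecidableEq V]
    (G : SimpleGraph V) : ℕ :=
  sInf {p | ∃ P : Finset (Finset V), P.card = p ∧ (∀ s ∈ P, IsPathSet G s) ∧
    ∀ v : V, ∃! s, s ∈ P ∧ v ∈ s}

open SimpleGraph Finset

variable {V : Type*} [Fintype V] [DecidableEq V]

lemma isPathSet_empty (G : SimpleGraph V) : IsPathSet G (∅ : Finset V) := by
  refine ⟨0, ⟨?_⟩⟩
  have h1 : IsEmpty (↥((∅ : Finset V) : Set V)) := by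
    constructor; rintro ⟨x, hx⟩; simp at hx
  have h2 : IsEmpty (Fin 0) := by infer_instance
  exact ⟨Equiv.equivOfIsEmpty _ _, fun {a} => (h1.false a).elim⟩

lemma isPathSet_singleton (G : SimpleGraph V) (u : V) : IsPathSet G ({u} : Finset V) := by
  refine ⟨1, ⟨?_⟩⟩
  refine ⟨⟨fun _ => 0, fun _ => ⟨u, by simp⟩, ?_, ?_⟩, ?_⟩
  · rintro ⟨x, hx⟩
    simp only [Finset.coe_singleton, Set.mem_singleton_iff] at hx
    exact Subtype.ext hx.symm
  · intro j; exact Subsingleton.elim _ _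
  · rintro ⟨x, hx⟩ ⟨y, hy⟩
    simp only [Finset.coe_singleton, Set.mem_singleton_iff] at hx hy
    subst hx; subst hy
    simp [SimpleGraph.pathGraph_adj]

/-- Induced subgraph of induced subgraph. -/
def nestedIso (G : SimpleGraph V) (A : Set V) [DecidableEq A] (s : Finset A) :
    (SimpleGraph.induce (↑s : Set A) (SimpleGraph.induce A G)) ≃g
      (SimpleGraph.induce (↑(s.image Subtype.val) : Set V) G) where
  toFun x := ⟨x.1.1, by
    simp only [Finset.coe_image, Set.mem_image, Finset.mem_coe]
    exact ⟨x.1, x.2, rfl⟩⟩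
  invFun y := ⟨⟨y.1, by
      have := y.2
      simp only [Finset.coe_image, Set.mem_image, Finset.mem_coe] at this
      obtain ⟨a, _, ha⟩ := this
      exact ha ▸ a.2⟩, by
    have := y.2
    simp only [Finset.coe_image, Set.mem_image, Finset.mem_coe] at this
    obtain ⟨a, has, ha⟩ := this
    have : a = ⟨y.1, ha ▸ a.2⟩ := Subtype.ext ha
    simpa only [Finset.mem_coe, ← this] using has⟩
  left_inv x := by ext; rfl
  right_inv y := by ext; rfl
  map_rel_iff' := Iff.rfl

lemma isPathSet_induce_iff (G : SimpleGraph V) (A : Set V) [DecidableEq A] [Fintype A] (s : Finset A) :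
    IsPathSet (SimpleGraph.induce A G) s ↔ IsPathSet G (s.image Subtype.val) := by
  constructor
  · rintro ⟨m, ⟨φ⟩⟩
    exact ⟨m, ⟨((nestedIso G A s).symm.trans φ)⟩⟩
  · rintro ⟨m, ⟨φ⟩⟩
    exact ⟨m, ⟨((nestedIso G A s).trans φ)⟩⟩

lemma pathGraph_exists_adj {k : ℕ} (hk : 2 ≤ k) (i : Fin k) :
    ∃ j, (SimpleGraph.pathGraph k).Adj i j := by
  by_cases h : i.val + 1 < k
  · exact ⟨⟨i.val + 1, h⟩, by simp [SimpleGraph.pathGraph_adj]⟩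
  · refine ⟨⟨i.val - 1, by omega⟩, ?_⟩
    have : i.val = k - 1 := by omega
    simp only [SimpleGraph.pathGraph_adj]
    right; show i.val - 1 + 1 = i.val; omega

/-- Restriction of a graph isomorphism to an induced subgraph. -/
def isoInduceImage {α β : Type*} {G : SimpleGraph α} {H : SimpleGraph β} (f : G ≃g H)
    (S : Set α) : (SimpleGraph.induce S G) ≃g (SimpleGraph.induce (f '' S) H) where
  toEquiv := Equiv.image f.toEquiv S
  map_rel_iff' := by
    rintro ⟨a, ha⟩ ⟨b, hb⟩
    exact f.map_rel_iff

/-- An interval inside a path graph induces a path graph. -/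
def pathGraphInterval (k a b : ℕ) :
    (SimpleGraph.induce {j : Fin k | a ≤ j.val ∧ j.val < b} (SimpleGraph.pathGraph k)) ≃g
      SimpleGraph.pathGraph (min b k - a) where
  toFun x := ⟨x.1.val - a, by have h1 := x.2.1; have h2 := x.2.2; have h3 := x.1.isLt; omega⟩
  invFun j := ⟨⟨j.val + a, by have := j.isLt; omega⟩, by
    constructor
    · simp
    · show j.val + a < b
      have := j.isLt; omega⟩
  left_inv x := by
    apply Subtype.ext; apply Fin.ext
    show x.1.val - a + a = x.1.val
    have := x.2.1; omega
  right_inv j := by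
    apply Fin.ext
    show j.val + a - a = j.val
    omega
  map_rel_iff' := by
    rintro ⟨⟨x, hx⟩, hx2⟩ ⟨⟨y, hy⟩, hy2⟩
    show (SimpleGraph.pathGraph (min b k - a)).Adj ⟨x - a, _⟩ ⟨y - a, _⟩ ↔ _
    simp only [SimpleGraph.comap_adj, Function.Embedding.coe_subtype,
      SimpleGraph.pathGraph_adj]
    obtain ⟨h1, h2⟩ := hx2; obtain ⟨h3, h4⟩ := hy2
    simp only [Set.mem_setOf_eq] at h1 h2 h3 h4 ⊢
    constructor <;> (intro h; omega)

variable {G : SimpleGraph V} {Q : Finset V} {k : ℕ}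

/-- The subset of `Q` whose `φ`-positions lie in `[a, b)`. -/
def piece (φ : (SimpleGraph.induce (↑Q : Set V) G) ≃g SimpleGraph.pathGraph k)
    (a b : ℕ) : Finset V :=
  ((Finset.univ : Finset ↥(↑Q : Set V)).filter
    (fun x => a ≤ (φ x).val ∧ (φ x).val < b)).image Subtype.val

omit [Fintype V] in
lemma piece_subset (φ : (SimpleGraph.induce (↑Q : Set V) G) ≃g SimpleGraph.pathGraph k)
    (a b : ℕ) : piece φ a b ⊆ Q := by
  intro y hy
  simp only [piece, Finset.mem_image, Finset.mem_filter, Finset.mem_univ, true_and] at hy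
  obtain ⟨x, _, hx⟩ := hy
  exact Finset.mem_coe.mp (hx ▸ x.2)

omit [Fintype V] in
lemma mem_piece (φ : (SimpleGraph.induce (↑Q : Set V) G) ≃g SimpleGraph.pathGraph k)
    {a b : ℕ} {y : V} (h : y ∈ Q) :
    y ∈ piece φ a b ↔ a ≤ (φ ⟨y, Finset.mem_coe.mpr h⟩).val ∧
      (φ ⟨y, Finset.mem_coe.mpr h⟩).val < b := by
  simp only [piece, Finset.mem_image, Finset.mem_filter, Finset.mem_univ, true_and]
  constructor
  · rintro ⟨x, hx, rfl⟩
    exact hx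
  · intro hb
    exact ⟨⟨y, Finset.mem_coe.mpr h⟩, hb, rfl⟩

omit [Fintype V] in
lemma piece_self_empty (φ : (SimpleGraph.induce (↑Q : Set V) G) ≃g SimpleGraph.pathGraph k)
    (c : ℕ) : piece φ c c = ∅ := by
  rw [Finset.eq_empty_iff_forall_notMem]
  intro y hy
  have hyQ := piece_subset φ c c hy
  have := (mem_piece φ hyQ).mp hy
  omega

lemma isPathSet_piece (φ : (SimpleGraph.induce (↑Q : Set V) G) ≃g SimpleGraph.pathGraph k)
    (a b : ℕ) : IsPathSet G (piece φ a b) := by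
  classical
  set s' : Finset ↥(↑Q : Set V) := (Finset.univ.filter
    (fun x => a ≤ (φ x).val ∧ (φ x).val < b)) with hs'
  have him : φ '' (↑s' : Set ↥(↑Q : Set V)) = {j : Fin k | a ≤ j.val ∧ j.val < b} := by
    ext j
    simp only [Set.mem_image, Finset.mem_coe, hs', Finset.mem_filter, Finset.mem_univ, true_and,
      Set.mem_setOf_eq]
    constructor
    · rintro ⟨x, hx, rfl⟩; exact hx
    · intro hj
      exact ⟨φ.symm j, by simpa using hj, by simp⟩
  refine ⟨min b k - a, ⟨?_⟩⟩
  have e1 := (nestedIso G (↑Q : Set V) s').symm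
  have e2 := isoInduceImage φ (↑s' : Set ↥(↑Q : Set V))
  rw [him] at e2
  exact (e1.trans e2).trans (pathGraphInterval k a b)

lemma pathCoverNumber_le (G : SimpleGraph V) (P : Finset (Finset V))
    (h1 : ∀ s ∈ P, IsPathSet G s) (h2 : ∀ v : V, ∃! s, s ∈ P ∧ v ∈ s) :
    pathCoverNumber G ≤ P.card :=
  Nat.sInf_le ⟨P, rfl, h1, h2⟩

lemma exists_min_cover (G : SimpleGraph V) :
    ∃ P : Finset (Finset V), P.card = pathCoverNumber G ∧ (∀ s ∈ P, IsPathSet G s) ∧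
      ∀ v : V, ∃! s, s ∈ P ∧ v ∈ s := by
  have hne : {p | ∃ P : Finset (Finset V), P.card = p ∧ (∀ s ∈ P, IsPathSet G s) ∧
      ∀ v : V, ∃! s, s ∈ P ∧ v ∈ s}.Nonempty := by
    refine ⟨_, Finset.univ.image (fun x => ({x} : Finset V)), rfl, ?_, ?_⟩
    · intro s hs
      simp only [Finset.mem_image] at hs
      obtain ⟨x, _, rfl⟩ := hs
      exact isPathSet_singleton G x
    · intro x
      refine ⟨{x}, ⟨Finset.mem_image.mpr ⟨x, Finset.mem_univ x, rfl⟩, Finset.mem_singleton_self x⟩, ?_⟩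
      rintro s ⟨hs, hxs⟩
      simp only [Finset.mem_image] at hs
      obtain ⟨y, _, rfl⟩ := hs
      simp only [Finset.mem_singleton] at hxs
      subst hxs; rfl
  have := Nat.sInf_mem hne
  obtain ⟨P, hP, h1, h2⟩ := this
  exact ⟨P, hP, h1, h2⟩

lemma cover_transfer (G : SimpleGraph V) (B : Finset V) (C : Finset (Finset V))
    (hsub : ∀ s ∈ C, s ⊆ B)
    (hpath : ∀ s ∈ C, IsPathSet G s)
    (hcov : ∀ x ∈ B, ∃! s, s ∈ C ∧ x ∈ s) :
    pathCoverNumber (SimpleGraph.induce (↑B : Set V) G) ≤ C.card := by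
  classical
  haveI : DecidablePred (fun x : V => x ∈ (↑B : Set V)) :=
    fun x => decidable_of_iff (x ∈ B) Finset.mem_coe.symm
  set f : Finset V → Finset ↥(↑B : Set V) :=
    fun s => s.subtype (fun x => x ∈ (↑B : Set V)) with hf
  have hmemf : ∀ (s : Finset V) (x : ↥(↑B : Set V)), x ∈ f s ↔ x.1 ∈ s := by
    intro s x; simp [hf, Finset.mem_subtype]
  have himf : ∀ s ∈ C, (f s).image Subtype.val = s := by
    intro s hs
    ext y
    simp only [Finset.mem_image]
    constructor
    · rintro ⟨x, hx, rfl⟩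
      exact (hmemf s x).mp hx
    · intro hy
      exact ⟨⟨y, Finset.mem_coe.mpr (hsub s hs hy)⟩, (hmemf s _).mpr hy, rfl⟩
  refine le_trans (pathCoverNumber_le _ (C.image f) ?_ ?_) (Finset.card_image_le)
  · intro t ht
    simp only [Finset.mem_image] at ht
    obtain ⟨s, hs, rfl⟩ := ht
    rw [isPathSet_induce_iff G (↑B : Set V) (f s), himf s hs]
    exact hpath s hs
  · intro x
    obtain ⟨s, ⟨hsC, hxs⟩, huniq⟩ := hcov x.1 (Finset.mem_coe.mp x.2)
    refine ⟨f s, ⟨Finset.mem_image.mpr ⟨s, hsC, rfl⟩, (hmemf s x).mpr hxs⟩, ?_⟩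
    rintro t ⟨htP, hxt⟩
    simp only [Finset.mem_image] at htP
    obtain ⟨s', hs', rfl⟩ := htP
    rw [huniq s' ⟨hs', (hmemf s' x).mp hxt⟩]

lemma isPathSet_triple (G : SimpleGraph V) (u₁ w u₂ : V) (h12 : u₁ ≠ u₂) (h1v : u₁ ≠ w)
    (h2v : u₂ ≠ w) (a1 : G.Adj u₁ w) (a2 : G.Adj w u₂) (na : ¬ G.Adj u₁ u₂) :
    IsPathSet G ({u₁, w, u₂} : Finset V) := by
  classical
  refine ⟨3, ⟨?_⟩⟩
  have hmem : ∀ x : ↥(↑({u₁, w, u₂} : Finset V) : Set V), x.1 = u₁ ∨ x.1 = w ∨ x.1 = u₂ := by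
    rintro ⟨x, hx⟩
    simpa using hx
  refine ⟨⟨fun x => if x.1 = u₁ then 0 else if x.1 = w then 1 else 2,
    fun j => if j = 0 then ⟨u₁, by simp⟩ else if j = 1 then ⟨w, by simp⟩ else ⟨u₂, by simp⟩,
    ?_, ?_⟩, ?_⟩
  · intro x
    rcases hmem x with h | h | h <;> (apply Subtype.ext; simp [h, h12, h1v, h2v, h12.symm, h1v.symm, h2v.symm])
  · intro j
    fin_cases j <;> simp [h12, h1v, h2v, Ne.symm h1v, Ne.symm h2v, Ne.symm h12]
  · intro x y
    have na' : ¬ G.Adj u₂ u₁ := fun h => na h.symm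
    rcases hmem x with hx | hx | hx <;> rcases hmem y with hy | hy | hy <;>
      simp only [Equiv.coe_fn_mk, hx, hy, SimpleGraph.comap_adj,
        Function.Embedding.coe_subtype, SimpleGraph.pathGraph_adj] <;>
      simp [h12, h1v, h2v, Ne.symm h1v, Ne.symm h2v, Ne.symm h12, a1, a2, na, a1.symm,
        a2.symm, na', G.irrefl, hx, hy, Fin.ext_iff]

/-- If v is adjacent to m ≥ 2 pendant vertices and at most one non-pendant
vertex in a tree T, and T₁ is obtained by deleting v and its pendant
neighbors, then P(T) = P(T₁) + m − 1. -/
theorem stmt14 {n : ℕ} (T : SimpleGraph (Fin n)) [DecidableRel T.Adj] (hT : T.IsTree)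
    (v : Fin n) (m : ℕ) (hm : 2 ≤ m) (U : Finset (Fin n)) (hU : U.card = m)
    (hpend : ∀ u ∈ U, T.Adj v u ∧ T.degree u = 1)
    (hnonpend : ∀ w w' : Fin n, T.Adj v w → T.degree w ≠ 1 →
      T.Adj v w' → T.degree w' ≠ 1 → w = w') :
    pathCoverNumber T =
      pathCoverNumber (SimpleGraph.induce (↑((insert v U)ᶜ) : Set (Fin n)) T) + (m - 1) := by
  classical
  set K : Finset (Fin n) := insert v U with hK
  set B : Finset (Fin n) := Kᶜ with hB
  have hvU : v ∉ U := fun h => ((hpend v h).1).ne rfl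
  have huniqnbr : ∀ u ∈ U, ∀ y : Fin n, T.Adj u y → y = v := by
    intro u hu y hy
    obtain ⟨hadj, hdeg⟩ := hpend u hu
    obtain ⟨z, hz⟩ := Finset.card_eq_one.mp hdeg
    have h1 : v ∈ T.neighborFinset u := (SimpleGraph.mem_neighborFinset T u v).mpr hadj.symm
    have h2 : y ∈ T.neighborFinset u := (SimpleGraph.mem_neighborFinset T u y).mpr hy
    rw [hz, Finset.mem_singleton] at h1 h2
    rw [h2, h1]
  have hmemK : ∀ x : Fin n, x ∈ K ↔ x = v ∨ x ∈ U := fun x => Finset.mem_insert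
  have hmemB : ∀ x : Fin n, x ∈ B ↔ x ∉ K := fun x => Finset.mem_compl
  -- Upper bound
  have hupper : pathCoverNumber T ≤
      pathCoverNumber (SimpleGraph.induce (↑B : Set (Fin n)) T) + (m - 1) := by
    obtain ⟨P₁, hP₁card, hP₁path, hP₁cov⟩ :=
      exists_min_cover (SimpleGraph.induce (↑B : Set (Fin n)) T)
    obtain ⟨u₁, hu₁, u₂, hu₂, h12⟩ := Finset.one_lt_card.mp (by omega : 1 < U.card)
    set g : Finset ↥(↑B : Set (Fin n)) → Finset (Fin n) :=
      fun s => s.image Subtype.val with hg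
    have hginj : Function.Injective g := Finset.image_injective Subtype.val_injective
    have hgK : ∀ (s : Finset ↥(↑B : Set (Fin n))) (x : Fin n), x ∈ g s → x ∉ K := by
      intro s x hx
      simp only [hg, Finset.mem_image] at hx
      obtain ⟨y, _, rfl⟩ := hx
      exact (hmemB _).mp (Finset.mem_coe.mp y.2)
    set triple : Finset (Fin n) := {u₁, v, u₂} with htriple
    have hvtriple : v ∈ triple := by simp [htriple]
    set S : Finset (Finset (Fin n)) := (U \ {u₁, u₂}).image (fun u => ({u} : Finset (Fin n)))
      with hS
    set P : Finset (Finset (Fin n)) := (P₁.image g) ∪ (insert triple S) with hP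
    have hu1v : u₁ ≠ v := ((hpend u₁ hu₁).1).ne'
    have hu2v : u₂ ≠ v := ((hpend u₂ hu₂).1).ne'
    have hmemtriple : ∀ x, x ∈ triple ↔ x = u₁ ∨ x = v ∨ x = u₂ := by
      intro x; simp [htriple]
    have htripleK : ∀ x ∈ triple, x ∈ K := by
      intro x hx
      rcases (hmemtriple x).mp hx with rfl | rfl | rfl
      · exact (hmemK _).mpr (Or.inr hu₁)
      · exact (hmemK _).mpr (Or.inl rfl)
      · exact (hmemK _).mpr (Or.inr hu₂)
    have hScase : ∀ t ∈ S, ∃ u, u ∈ U ∧ u ≠ u₁ ∧ u ≠ u₂ ∧ t = {u} := by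
      intro t ht
      simp only [hS, Finset.mem_image, Finset.mem_sdiff, Finset.mem_insert,
        Finset.mem_singleton] at ht
      obtain ⟨u, ⟨huU, hu'⟩, rfl⟩ := ht
      exact ⟨u, huU, fun h => hu' (Or.inl h), fun h => hu' (Or.inr h), rfl⟩
    have hPcase : ∀ t ∈ P, (∃ s ∈ P₁, t = g s) ∨ t = triple ∨
        ∃ u, u ∈ U ∧ u ≠ u₁ ∧ u ≠ u₂ ∧ t = {u} := by
      intro t ht
      rw [hP, Finset.mem_union, Finset.mem_insert] at ht
      rcases ht with ht | ht | ht
      · obtain ⟨s, hs, rfl⟩ := Finset.mem_image.mp ht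
        exact Or.inl ⟨s, hs, rfl⟩
      · exact Or.inr (Or.inl ht)
      · exact Or.inr (Or.inr (hScase t ht))
    -- cardinality
    have hcard : P.card = P₁.card + (m - 1) := by
      have hd1 : Disjoint (P₁.image g) (insert triple S) := by
        rw [Finset.disjoint_left]
        intro t ht ht'
        obtain ⟨s, _, rfl⟩ := Finset.mem_image.mp ht
        rcases Finset.mem_insert.mp ht' with h | ht'
        · exact hgK s v (h.symm ▸ hvtriple) (htripleK v hvtriple)
        · obtain ⟨u, huU, _, _, he⟩ := hScase _ ht'
          exact hgK s u (he.symm ▸ Finset.mem_singleton_self u)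
            ((hmemK _).mpr (Or.inr huU))
      have hd2 : triple ∉ S := by
        intro h
        obtain ⟨u, huU, _, _, he⟩ := hScase _ h
        rw [he] at hvtriple
        exact hvU (Finset.mem_singleton.mp hvtriple ▸ huU)
      have hScard : S.card = m - 2 := by
        rw [hS, Finset.card_image_of_injective _ (fun a b h => by
          simpa using Finset.singleton_injective h)]
        rw [Finset.card_sdiff_of_subset (by
          intro x hx
          rcases Finset.mem_insert.mp hx with rfl | hx
          · exact hu₁
          · exact Finset.mem_singleton.mp hx ▸ hu₂)]
        rw [hU, Finset.card_insert_of_notMem (by simpa using h12), Finset.card_singleton]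
      rw [hP, Finset.card_union_of_disjoint hd1,
        Finset.card_image_of_injective _ hginj,
        Finset.card_insert_of_notMem hd2, hScard]
      omega
    -- path property
    have hpathP : ∀ s ∈ P, IsPathSet T s := by
      intro t ht
      rcases hPcase t ht with ⟨s, hs, rfl⟩ | rfl | ⟨u, huU, _, _, rfl⟩
      · exact (isPathSet_induce_iff T (↑B : Set (Fin n)) s).mp (hP₁path s hs)
      · refine isPathSet_triple T u₁ v u₂ h12 hu1v hu2v
          ((hpend u₁ hu₁).1).symm (hpend u₂ hu₂).1 ?_
        intro hadj
        exact hvU ((huniqnbr u₁ hu₁ u₂ hadj) ▸ hu₂)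
      · exact isPathSet_singleton T u
    -- cover property
    have hcovP : ∀ x : Fin n, ∃! s, s ∈ P ∧ x ∈ s := by
      intro x
      by_cases hxK : x ∈ K
      · -- x is in K: covered by triple or a singleton
        have huniq : ∀ t ∈ P, x ∈ t → (x ∈ ({u₁, v, u₂} : Finset (Fin n)) → t = triple) ∧
            (∀ u0, u0 ∈ U → u0 ≠ u₁ → u0 ≠ u₂ → x = u0 → t = {u0}) := by
          intro t ht hxt
          rcases hPcase t ht with ⟨s, hs, rfl⟩ | rfl | ⟨u, huU, hne1, hne2, rfl⟩
          · exact absurd hxK (hgK s x hxt)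
          · constructor
            · intro _; rfl
            · intro u0 hu0 hne1 hne2 heq
              rcases (hmemtriple x).mp hxt with h | h | h
              · exact absurd (heq.symm.trans h) hne1
              · exact absurd ((heq.symm.trans h) ▸ hu0) hvU
              · exact absurd (heq.symm.trans h) hne2
          · have hxu : x = u := Finset.mem_singleton.mp hxt
            subst hxu
            constructor
            · intro hx3
              rcases (hmemtriple x).mp hx3 with rfl | rfl | rfl
              · exact absurd rfl hne1
              · exact absurd huU hvU
              · exact absurd rfl hne2
            · intro u0 _ _ _ h; rw [h]
        rcases (hmemK x).mp hxK with rfl | hxU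
        · refine ⟨triple, ⟨by rw [hP]; simp, hvtriple⟩, ?_⟩
          rintro t ⟨ht, hxt⟩
          exact (huniq t ht hxt).1 (by simp)
        · by_cases hx12 : x = u₁ ∨ x = u₂
          · have hxtriple : x ∈ triple := by
              rcases hx12 with rfl | rfl
              · exact (hmemtriple x).mpr (Or.inl rfl)
              · exact (hmemtriple x).mpr (Or.inr (Or.inr rfl))
            refine ⟨triple, ⟨by rw [hP]; simp, hxtriple⟩, ?_⟩
            rintro t ⟨ht, hxt⟩
            exact (huniq t ht hxt).1 hxtriple
          · push_neg at hx12
            have hxS : ({x} : Finset (Fin n)) ∈ S := by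
              rw [hS]
              exact Finset.mem_image.mpr ⟨x, by simp [hxU, hx12.1, hx12.2], rfl⟩
            refine ⟨{x}, ⟨by rw [hP]; simp [hxS], Finset.mem_singleton_self x⟩, ?_⟩
            rintro t ⟨ht, hxt⟩
            exact (huniq t ht hxt).2 x hxU hx12.1 hx12.2 rfl
      · -- x not in K: covered by the image of the P₁-block
        have hxB : x ∈ B := (hmemB x).mpr hxK
        obtain ⟨s₁, ⟨hs₁, hxs₁⟩, hs₁uniq⟩ := hP₁cov ⟨x, Finset.mem_coe.mpr hxB⟩
        have hgs₁P : g s₁ ∈ P := by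
          rw [hP]; exact Finset.mem_union_left _ (Finset.mem_image_of_mem g hs₁)
        refine ⟨g s₁, ⟨hgs₁P, Finset.mem_image_of_mem _ hxs₁⟩, ?_⟩
        rintro t ⟨ht, hxt⟩
        rcases hPcase t ht with ⟨s, hs, rfl⟩ | rfl | ⟨u, huU, _, _, rfl⟩
        · obtain ⟨y, hy, hyx⟩ := Finset.mem_image.mp hxt
          have : y = ⟨x, Finset.mem_coe.mpr hxB⟩ := Subtype.ext hyx
          subst this
          rw [hs₁uniq s ⟨hs, hy⟩]
        · exact absurd (htripleK x hxt) hxK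
        · exact absurd ((hmemK x).mpr (Or.inr (Finset.mem_singleton.mp hxt ▸ huU))) hxK
    calc pathCoverNumber T ≤ P.card := pathCoverNumber_le T P hpathP hcovP
      _ = P₁.card + (m - 1) := hcard
      _ = _ := by rw [hP₁card]
  have hlower : pathCoverNumber (SimpleGraph.induce (↑B : Set (Fin n)) T) + (m - 1) ≤
      pathCoverNumber T := by
    obtain ⟨P, hPcard, hPpath, hPcov⟩ := exists_min_cover T
    obtain ⟨Q, ⟨hQP, hvQ⟩, hQuniq⟩ := hPcov v
    obtain ⟨k, ⟨φ⟩⟩ := hPpath Q hQP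
    have hvK : v ∈ K := Finset.mem_insert_self v U
    have hposinj : ∀ (x y : Fin n) (hx : x ∈ Q) (hy : y ∈ Q),
        (φ ⟨x, Finset.mem_coe.mpr hx⟩).val = (φ ⟨y, Finset.mem_coe.mpr hy⟩).val → x = y := by
      intro x y hx hy h
      have h2 : φ ⟨x, Finset.mem_coe.mpr hx⟩ = φ ⟨y, Finset.mem_coe.mpr hy⟩ := Fin.ext h
      have h3 := (EquivLike.injective φ) h2
      exact congrArg Subtype.val h3
    -- blocks of U-elements outside Q are singletons
    have hblockU : ∀ u ∈ U, u ∉ Q → ∀ s ∈ P, u ∈ s → s = {u} := by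
      intro u hu huQ s hsP hus
      have honly : ∀ y ∈ s, y = u := by
        by_contra hcon
        push_neg at hcon
        obtain ⟨y, hy, hyne⟩ := hcon
        obtain ⟨k', ⟨ψ⟩⟩ := hPpath s hsP
        have hk' : 2 ≤ k' := by
          have h1 : Fintype.card ↥(↑s : Set (Fin n)) = s.card := by simp
          have h3 := Fintype.card_congr ψ.toEquiv
          rw [h1, Fintype.card_fin] at h3
          have h4 : 1 < s.card := Finset.one_lt_card.mpr ⟨u, hus, y, hy, fun h => hyne h.symm⟩
          omega
        obtain ⟨j, hj⟩ := pathGraph_exists_adj hk' (ψ ⟨u, Finset.mem_coe.mpr hus⟩)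
        have hj' : (SimpleGraph.pathGraph k').Adj (ψ ⟨u, Finset.mem_coe.mpr hus⟩)
            (ψ (ψ.symm j)) := by rwa [RelIso.apply_symm_apply]
        have hadj : (SimpleGraph.induce (↑s : Set (Fin n)) T).Adj
            ⟨u, Finset.mem_coe.mpr hus⟩ (ψ.symm j) := ψ.map_rel_iff.mp hj'
        have hTadj : T.Adj u (ψ.symm j).1 := hadj
        have hveq : (ψ.symm j).1 = v := huniqnbr u hu _ hTadj
        have hvs : v ∈ s := hveq ▸ Finset.mem_coe.mp (ψ.symm j).2
        have hsQ : s = Q := hQuniq s ⟨hsP, hvs⟩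
        exact huQ (hsQ ▸ hus)
      exact Finset.eq_singleton_iff_unique_mem.mpr ⟨hus, honly⟩
    -- neighbours of U-positions inside Q
    have hUnbr : ∀ u (hu : u ∈ U) (huQ : u ∈ Q) (j : Fin k),
        (SimpleGraph.pathGraph k).Adj (φ ⟨u, Finset.mem_coe.mpr huQ⟩) j →
        j = φ ⟨v, Finset.mem_coe.mpr hvQ⟩ := by
      intro u hu huQ j hadj
      have hadj' : (SimpleGraph.pathGraph k).Adj (φ ⟨u, Finset.mem_coe.mpr huQ⟩)
          (φ (φ.symm j)) := by rwa [RelIso.apply_symm_apply]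
      have h2 : T.Adj u (φ.symm j).1 := φ.map_rel_iff.mp hadj'
      have h3 : (φ.symm j).1 = v := huniqnbr u hu _ h2
      have h4 : φ.symm j = ⟨v, Finset.mem_coe.mpr hvQ⟩ := Subtype.ext h3
      rw [← h4, RelIso.apply_symm_apply]
    have hUadj : ∀ u (hu : u ∈ U) (huQ : u ∈ Q),
        (SimpleGraph.pathGraph k).Adj (φ ⟨u, Finset.mem_coe.mpr huQ⟩)
          (φ ⟨v, Finset.mem_coe.mpr hvQ⟩) := by
      intro u hu huQ
      have hTadj : T.Adj u v := ((hpend u hu).1).symm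
      exact φ.map_rel_iff.mpr hTadj
    set i : ℕ := (φ ⟨v, Finset.mem_coe.mpr hvQ⟩).val with hi
    have hik : i < k := (φ ⟨v, Finset.mem_coe.mpr hvQ⟩).isLt
    -- forced positions of U-elements in Q
    have hforce : ∀ u (hu : u ∈ U) (huQ : u ∈ Q),
        ((φ ⟨u, Finset.mem_coe.mpr huQ⟩).val = 0 ∧ i = 1) ∨
        ((φ ⟨u, Finset.mem_coe.mpr huQ⟩).val = i + 1 ∧ i + 2 = k) := by
      intro u hu huQ
      have hadj01 := hUadj u hu huQ
      rw [SimpleGraph.pathGraph_adj] at hadj01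
      have hnbr : ∀ j : Fin k, (SimpleGraph.pathGraph k).Adj
          (φ ⟨u, Finset.mem_coe.mpr huQ⟩) j → j.val = i := by
        intro j hj
        rw [hUnbr u hu huQ j hj]
      set ju : ℕ := (φ ⟨u, Finset.mem_coe.mpr huQ⟩).val with hju
      have hjuk : ju < k := (φ ⟨u, Finset.mem_coe.mpr huQ⟩).isLt
      rcases hadj01 with h | h
      · -- ju + 1 = i
        left
        have hju0 : ju = 0 := by
          by_contra h0
          have hlt : ju - 1 < k := by omega
          have hadj2 : (SimpleGraph.pathGraph k).Adj (φ ⟨u, Finset.mem_coe.mpr huQ⟩)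
              ⟨ju - 1, hlt⟩ := by
            rw [SimpleGraph.pathGraph_adj]
            right
            show (ju - 1) + 1 = ju
            omega
          have := hnbr _ hadj2
          simp only [] at this
          omega
        omega
      · -- i + 1 = ju
        right
        refine ⟨by omega, ?_⟩
        by_contra hk2
        have hlt : ju + 1 < k := by omega
        have hadj2 : (SimpleGraph.pathGraph k).Adj (φ ⟨u, Finset.mem_coe.mpr huQ⟩)
            ⟨ju + 1, hlt⟩ := by
          rw [SimpleGraph.pathGraph_adj]
          left
          show ju + 1 = ju + 1
          rfl
        have := hnbr _ hadj2
        simp only [] at this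
        omega
    -- the key interval
    have key : ∃ a b : ℕ, a ≤ b ∧
        (∀ x (hx : x ∈ Q), (x ∈ K ↔ a ≤ (φ ⟨x, Finset.mem_coe.mpr hx⟩).val ∧
          (φ ⟨x, Finset.mem_coe.mpr hx⟩).val < b)) ∧
        ((({piece φ 0 a, piece φ b k} : Finset (Finset (Fin n))).filter
          (fun s => s ≠ ∅)).card + (U ∩ Q).card ≤ 2) := by
      have hcard2 : ∀ R₁' R₂' : Finset (Fin n),
          (({R₁', R₂'} : Finset (Finset (Fin n))).filter (fun s => s ≠ ∅)).card ≤ 2 := by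
        intro R₁' R₂'
        refine le_trans (Finset.card_filter_le _ _) ?_
        refine le_trans (Finset.card_insert_le _ _) ?_
        simp
      have hposv : ∀ (hx : v ∈ Q), (φ ⟨v, Finset.mem_coe.mpr hx⟩).val = i := fun _ => rfl
      by_cases hc1 : ∃ u, u ∈ U ∧ u ∈ Q
      · obtain ⟨u, hu, huQ⟩ := hc1
        by_cases hc2 : ∃ u', (u' ∈ U ∧ u' ∈ Q) ∧ u' ≠ u
        · -- two pendant neighbours of v inside Q
          obtain ⟨u', ⟨hu', hu'Q⟩, hne⟩ := hc2
          have hpos := hforce u hu huQ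
          have hpos' := hforce u' hu' hu'Q
          have hnotsame : (φ ⟨u, Finset.mem_coe.mpr huQ⟩).val ≠
              (φ ⟨u', Finset.mem_coe.mpr hu'Q⟩).val :=
            fun h => hne ((hposinj u u' huQ hu'Q h).symm)
          have hw0 : ∃ w ∈ U, ∃ (hwQ : w ∈ Q), (φ ⟨w, Finset.mem_coe.mpr hwQ⟩).val = 0 := by
            rcases hpos with ⟨h1, h2⟩ | ⟨h1, h2⟩
            · exact ⟨u, hu, huQ, h1⟩
            · rcases hpos' with ⟨g1, g2⟩ | ⟨g1, g2⟩
              · exact ⟨u', hu', hu'Q, g1⟩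
              · exact absurd (h1.trans g1.symm) hnotsame
          have hw2 : ∃ w ∈ U, ∃ (hwQ : w ∈ Q),
              (φ ⟨w, Finset.mem_coe.mpr hwQ⟩).val = i + 1 := by
            rcases hpos with ⟨h1, h2⟩ | ⟨h1, h2⟩
            · rcases hpos' with ⟨g1, g2⟩ | ⟨g1, g2⟩
              · exact absurd (h1.trans g1.symm) hnotsame
              · exact ⟨u', hu', hu'Q, g1⟩
            · exact ⟨u, hu, huQ, h1⟩
          have hk3 : i + 2 = k := by
            rcases hpos with ⟨h1, h2⟩ | ⟨h1, h2⟩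
            · rcases hpos' with ⟨g1, g2⟩ | ⟨g1, g2⟩
              · exact absurd (h1.trans g1.symm) hnotsame
              · exact g2
            · exact h2
          have hi1 : i = 1 := by
            rcases hpos with ⟨h1, h2⟩ | ⟨h1, h2⟩
            · exact h2
            · rcases hpos' with ⟨g1, g2⟩ | ⟨g1, g2⟩
              · exact g2
              · exact absurd (h1.trans g1.symm) hnotsame
          obtain ⟨w0, hw0U, hw0Q, hw0pos⟩ := hw0
          obtain ⟨w2, hw2U, hw2Q, hw2pos⟩ := hw2
          refine ⟨0, k, Nat.zero_le k, ?_, ?_⟩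
          · intro x hx
            constructor
            · intro _
              exact ⟨Nat.zero_le _, (φ ⟨x, Finset.mem_coe.mpr hx⟩).isLt⟩
            · intro _
              have hjxk : (φ ⟨x, Finset.mem_coe.mpr hx⟩).val < k :=
                (φ ⟨x, Finset.mem_coe.mpr hx⟩).isLt
              have hcases : (φ ⟨x, Finset.mem_coe.mpr hx⟩).val = 0 ∨
                  (φ ⟨x, Finset.mem_coe.mpr hx⟩).val = i ∨
                  (φ ⟨x, Finset.mem_coe.mpr hx⟩).val = i + 1 := by omega
              rcases hcases with h | h | h
              · have : x = w0 := hposinj x w0 hx hw0Q (by omega)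
                exact (hmemK x).mpr (Or.inr (by rw [this]; exact hw0U))
              · have : x = v := hposinj x v hx hvQ (by rw [h, hposv hvQ])
                exact (hmemK x).mpr (Or.inl this)
              · have : x = w2 := hposinj x w2 hx hw2Q (by omega)
                exact (hmemK x).mpr (Or.inr (by rw [this]; exact hw2U))
          · have he1 : piece φ 0 0 = ∅ := piece_self_empty φ 0
            have he2 : piece φ k k = ∅ := piece_self_empty φ k
            have hfe : (({piece φ 0 0, piece φ k k} : Finset (Finset (Fin n))).filter
                (fun s => s ≠ ∅)).card = 0 := by
              rw [Finset.card_eq_zero, Finset.eq_empty_iff_forall_notMem]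
              intro t ht
              obtain ⟨ht1, ht2⟩ := Finset.mem_filter.mp ht
              rcases Finset.mem_insert.mp ht1 with rfl | h
              · exact ht2 he1
              · exact ht2 ((Finset.mem_singleton.mp h) ▸ he2)
            have hsub2 : U ∩ Q ⊆ {w0, w2} := by
              intro z hz
              obtain ⟨hzU, hzQ⟩ := Finset.mem_inter.mp hz
              rcases hforce z hzU hzQ with ⟨h1, _⟩ | ⟨h1, _⟩
              · exact Finset.mem_insert.mpr (Or.inl (hposinj z w0 hzQ hw0Q (by omega)))
              · refine Finset.mem_insert.mpr (Or.inr (Finset.mem_singleton.mpr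
                  (hposinj z w2 hzQ hw2Q (by omega))))
            have hle2 : (U ∩ Q).card ≤ 2 := by
              refine le_trans (Finset.card_le_card hsub2) ?_
              refine le_trans (Finset.card_insert_le _ _) ?_
              simp
            omega
        · -- exactly one pendant neighbour of v inside Q
          push_neg at hc2
          have hone : ∀ z, z ∈ U → z ∈ Q → z = u := fun z h1 h2 => hc2 z ⟨h1, h2⟩
          have hUQ : U ∩ Q = {u} := by
            ext z
            rw [Finset.mem_inter, Finset.mem_singleton]
            constructor
            · rintro ⟨h1, h2⟩
              exact hone z h1 h2
            · rintro rfl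
              exact ⟨hu, huQ⟩
          have hUQcard : (U ∩ Q).card = 1 := by rw [hUQ]; simp
          rcases hforce u hu huQ with ⟨h1, h2⟩ | ⟨h1, h2⟩
          · -- u at position 0, v at position 1
            refine ⟨0, 2, by omega, ?_, ?_⟩
            · intro x hx
              constructor
              · intro hxK
                rcases (hmemK x).mp hxK with rfl | hxU
                · rw [hposv hx]
                  omega
                · have : x = u := hone x hxU hx
                  subst this
                  rw [show (φ ⟨x, Finset.mem_coe.mpr hx⟩).val =
                    (φ ⟨x, Finset.mem_coe.mpr huQ⟩).val from rfl, h1]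
                  omega
              · rintro ⟨_, hlt⟩
                have : (φ ⟨x, Finset.mem_coe.mpr hx⟩).val = 0 ∨
                    (φ ⟨x, Finset.mem_coe.mpr hx⟩).val = 1 := by omega
                rcases this with h | h
                · have : x = u := hposinj x u hx huQ (by omega)
                  exact (hmemK x).mpr (Or.inr (by rw [this]; exact hu))
                · have : x = v := hposinj x v hx hvQ (by rw [h, hposv hvQ, h2])
                  exact (hmemK x).mpr (Or.inl this)
            · have he1 : piece φ 0 0 = ∅ := piece_self_empty φ 0
              have hsub : (({piece φ 0 0, piece φ 2 k} : Finset (Finset (Fin n))).filter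
                  (fun s => s ≠ ∅)) ⊆ {piece φ 2 k} := by
                intro t ht
                obtain ⟨ht1, ht2⟩ := Finset.mem_filter.mp ht
                rcases Finset.mem_insert.mp ht1 with rfl | h
                · exact absurd he1 ht2
                · exact h
              have := Finset.card_le_card hsub
              rw [Finset.card_singleton] at this
              omega
          · -- u at position i+1, v at position i = k-2
            refine ⟨i, k, by omega, ?_, ?_⟩
            · intro x hx
              constructor
              · intro hxK
                rcases (hmemK x).mp hxK with rfl | hxU
                · rw [hposv hx]
                  omega
                · have : x = u := hone x hxU hx
                  subst this
                  rw [show (φ ⟨x, Finset.mem_coe.mpr hx⟩).val =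
                    (φ ⟨x, Finset.mem_coe.mpr huQ⟩).val from rfl, h1]
                  omega
              · rintro ⟨hge, hlt⟩
                have : (φ ⟨x, Finset.mem_coe.mpr hx⟩).val = i ∨
                    (φ ⟨x, Finset.mem_coe.mpr hx⟩).val = i + 1 := by omega
                rcases this with h | h
                · have : x = v := hposinj x v hx hvQ (by rw [h, hposv hvQ])
                  exact (hmemK x).mpr (Or.inl this)
                · have : x = u := hposinj x u hx huQ (by omega)
                  exact (hmemK x).mpr (Or.inr (by rw [this]; exact hu))
            · have he2 : piece φ k k = ∅ := piece_self_empty φ k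
              have hsub : (({piece φ 0 i, piece φ k k} : Finset (Finset (Fin n))).filter
                  (fun s => s ≠ ∅)) ⊆ {piece φ 0 i} := by
                intro t ht
                obtain ⟨ht1, ht2⟩ := Finset.mem_filter.mp ht
                rcases Finset.mem_insert.mp ht1 with rfl | h
                · exact Finset.mem_singleton_self _
                · exact absurd ((Finset.mem_singleton.mp h) ▸ he2 : t = ∅) ht2
              have := Finset.card_le_card hsub
              rw [Finset.card_singleton] at this
              omega
      · -- no pendant neighbour of v inside Q
        push_neg at hc1
        have hUQ : U ∩ Q = ∅ := by
          rw [Finset.eq_empty_iff_forall_notMem]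
          intro z hz
          obtain ⟨hzU, hzQ⟩ := Finset.mem_inter.mp hz
          exact (hc1 z hzU) hzQ
        refine ⟨i, i + 1, by omega, ?_, ?_⟩
        · intro x hx
          constructor
          · intro hxK
            rcases (hmemK x).mp hxK with rfl | hxU
            · rw [hposv hx]
              omega
            · exact absurd hx (hc1 x hxU)
          · rintro ⟨hge, hlt⟩
            have : x = v := hposinj x v hx hvQ (by rw [hposv hvQ]; omega)
            exact (hmemK x).mpr (Or.inl this)
        · rw [hUQ]
          simpa using hcard2 (piece φ 0 i) (piece φ (i + 1) k)
    obtain ⟨a, b, hab, hcharK, hcnt⟩ := key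
    set R₁ : Finset (Fin n) := piece φ 0 a with hR₁
    set R₂ : Finset (Fin n) := piece φ b k with hR₂
    set pieces : Finset (Finset (Fin n)) :=
      ({R₁, R₂} : Finset (Finset (Fin n))).filter (fun s => s ≠ ∅) with hpieces
    set Cov : Finset (Finset (Fin n)) := (P.filter (fun s => Disjoint s K)) ∪ pieces with hCov
    have hpiececase : ∀ t ∈ pieces, t = R₁ ∨ t = R₂ := by
      intro t ht
      have := (Finset.mem_filter.mp ht).1
      rcases Finset.mem_insert.mp this with h | h
      · exact Or.inl h
      · exact Or.inr (Finset.mem_singleton.mp h)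
    have hR₁mem : ∀ x ∈ R₁, ∃ hx : x ∈ Q, (φ ⟨x, Finset.mem_coe.mpr hx⟩).val < a := by
      intro x hx
      have hxQ := piece_subset φ 0 a hx
      exact ⟨hxQ, ((mem_piece φ hxQ).mp hx).2⟩
    have hR₂mem : ∀ x ∈ R₂, ∃ hx : x ∈ Q, b ≤ (φ ⟨x, Finset.mem_coe.mpr hx⟩).val := by
      intro x hx
      have hxQ := piece_subset φ b k hx
      exact ⟨hxQ, ((mem_piece φ hxQ).mp hx).1⟩
    have hpieceB : ∀ t ∈ pieces, ∀ x ∈ t, x ∈ B := by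
      intro t ht x hxt
      rcases hpiececase t ht with rfl | rfl
      · obtain ⟨hxQ, hlt⟩ := hR₁mem x hxt
        refine (hmemB x).mpr (fun hxK => ?_)
        have := (hcharK x hxQ).mp hxK
        omega
      · obtain ⟨hxQ, hge⟩ := hR₂mem x hxt
        refine (hmemB x).mpr (fun hxK => ?_)
        have := (hcharK x hxQ).mp hxK
        omega
    have hCovsub : ∀ s ∈ Cov, s ⊆ B := by
      intro s hs
      rcases Finset.mem_union.mp hs with h | h
      · obtain ⟨hsP, hdisj⟩ := Finset.mem_filter.mp h
        intro x hx
        exact (hmemB x).mpr (Finset.disjoint_left.mp hdisj hx)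
      · intro x hx
        exact hpieceB s h x hx
    have hCovpath : ∀ s ∈ Cov, IsPathSet T s := by
      intro s hs
      rcases Finset.mem_union.mp hs with h | h
      · exact hPpath s (Finset.mem_filter.mp h).1
      · rcases hpiececase s h with rfl | rfl
        · exact isPathSet_piece φ 0 a
        · exact isPathSet_piece φ b k
    have hCovcov : ∀ x ∈ B, ∃! s, s ∈ Cov ∧ x ∈ s := by
      intro x hxB
      have hxK : x ∉ K := (hmemB x).mp hxB
      obtain ⟨s, ⟨hsP, hxs⟩, hsuniq⟩ := hPcov x
      by_cases hdisj : Disjoint s K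
      · refine ⟨s, ⟨Finset.mem_union_left _ (Finset.mem_filter.mpr ⟨hsP, hdisj⟩), hxs⟩, ?_⟩
        rintro t ⟨htC, hxt⟩
        rcases Finset.mem_union.mp htC with ht | ht
        · exact hsuniq t ⟨(Finset.mem_filter.mp ht).1, hxt⟩
        · -- t is a piece contained in Q, so s would be Q, contradicting disjointness
          have hxQ : x ∈ Q := by
            rcases hpiececase t ht with rfl | rfl
            · exact piece_subset φ 0 a hxt
            · exact piece_subset φ b k hxt
          have hQs : Q = s := hsuniq Q ⟨hQP, hxQ⟩
          exact absurd hvK (Finset.disjoint_left.mp hdisj (hQs ▸ hvQ))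
      · -- the block of x is Q
        have hsQ : s = Q := by
          rw [Finset.not_disjoint_iff] at hdisj
          obtain ⟨y, hys, hyK⟩ := hdisj
          rcases (hmemK y).mp hyK with rfl | hyU
          · exact hQuniq s ⟨hsP, hys⟩
          · by_cases hyQ : y ∈ Q
            · obtain ⟨sy, _, hyuniq⟩ := hPcov y
              rw [hyuniq s ⟨hsP, hys⟩, ← hyuniq Q ⟨hQP, hyQ⟩]
            · have hsy : s = {y} := hblockU y hyU hyQ s hsP hys
              rw [hsy] at hxs
              exact absurd hyK (Finset.mem_singleton.mp hxs ▸ hxK)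
        have hxQ : x ∈ Q := hsQ ▸ hxs
        have hor : (φ ⟨x, Finset.mem_coe.mpr hxQ⟩).val < a ∨
            b ≤ (φ ⟨x, Finset.mem_coe.mpr hxQ⟩).val := by
          have := (hcharK x hxQ)
          by_contra hcon
          push_neg at hcon
          exact hxK (this.mpr ⟨by omega, by omega⟩)
        have hinpieces : ∀ R : Finset (Fin n), R ∈ ({R₁, R₂} : Finset (Finset (Fin n))) →
            x ∈ R → R ∈ pieces := by
          intro R hR hxR
          exact Finset.mem_filter.mpr ⟨hR, Finset.ne_empty_of_mem hxR⟩
        have huniqpiece : ∀ t ∈ Cov, x ∈ t → ∀ R₀ : Finset (Fin n),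
            (R₀ = R₁ ∧ x ∈ R₁) ∨ (R₀ = R₂ ∧ x ∈ R₂) → t = R₀ := by
          rintro t htC hxt R₀ hR₀
          rcases Finset.mem_union.mp htC with ht | ht
          · obtain ⟨htP, htdisj⟩ := Finset.mem_filter.mp ht
            have : t = s := hsuniq t ⟨htP, hxt⟩
            rw [this, hsQ] at htdisj
            exact absurd hvK (Finset.disjoint_left.mp htdisj hvQ)
          · rcases hpiececase t ht with rfl | rfl
            · rcases hR₀ with ⟨rfl, _⟩ | ⟨rfl, hxR₂⟩
              · rfl
              · obtain ⟨h1, h2⟩ := hR₁mem x hxt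
                obtain ⟨h3, h4⟩ := hR₂mem x hxR₂
                omega
            · rcases hR₀ with ⟨rfl, hxR₁⟩ | ⟨rfl, _⟩
              · obtain ⟨h1, h2⟩ := hR₂mem x hxt
                obtain ⟨h3, h4⟩ := hR₁mem x hxR₁
                omega
              · rfl
        rcases hor with hlt | hge
        · have hxR₁ : x ∈ R₁ := (mem_piece φ hxQ).mpr ⟨Nat.zero_le _, hlt⟩
          refine ⟨R₁, ⟨Finset.mem_union_right _
            (hinpieces R₁ (Finset.mem_insert_self _ _) hxR₁), hxR₁⟩, ?_⟩
          rintro t ⟨htC, hxt⟩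
          exact huniqpiece t htC hxt R₁ (Or.inl ⟨rfl, hxR₁⟩)
        · have hxR₂ : x ∈ R₂ := (mem_piece φ hxQ).mpr
            ⟨hge, (φ ⟨x, Finset.mem_coe.mpr hxQ⟩).isLt⟩
          refine ⟨R₂, ⟨Finset.mem_union_right _
            (hinpieces R₂ (by simp) hxR₂), hxR₂⟩, ?_⟩
          rintro t ⟨htC, hxt⟩
          exact huniqpiece t htC hxt R₂ (Or.inr ⟨rfl, hxR₂⟩)
    -- counting
    have hcount : Cov.card + (m - 1) ≤ P.card := by
      have hsplit := Finset.card_filter_add_card_filter_not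
        (s := P) (p := fun s => Disjoint s K)
      set E : Finset (Finset (Fin n)) :=
        insert Q ((U \ Q).image (fun u => ({u} : Finset (Fin n)))) with hE
      have hEsub : E ⊆ P.filter (fun s => ¬ Disjoint s K) := by
        intro t ht
        rcases Finset.mem_insert.mp ht with rfl | ht
        · exact Finset.mem_filter.mpr ⟨hQP, fun h =>
            absurd hvK (Finset.disjoint_left.mp h hvQ)⟩
        · obtain ⟨u, hu', rfl⟩ := Finset.mem_image.mp ht
          obtain ⟨huU, huQ⟩ := Finset.mem_sdiff.mp hu'
          obtain ⟨su, ⟨hsuP, husu⟩, _⟩ := hPcov u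
          have : su = {u} := hblockU u huU huQ su hsuP husu
          refine Finset.mem_filter.mpr ⟨this ▸ hsuP, fun h => ?_⟩
          exact absurd ((hmemK u).mpr (Or.inr huU))
            (Finset.disjoint_left.mp h (Finset.mem_singleton_self u))
      have hQnotim : Q ∉ (U \ Q).image (fun u => ({u} : Finset (Fin n))) := by
        intro h
        obtain ⟨u, hu', he⟩ := Finset.mem_image.mp h
        have : v ∈ ({u} : Finset (Fin n)) := he ▸ hvQ
        exact hvU ((Finset.mem_singleton.mp this) ▸ (Finset.mem_sdiff.mp hu').1)
      have hEcard : E.card = 1 + (U \ Q).card := by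
        rw [hE, Finset.card_insert_of_notMem hQnotim,
          Finset.card_image_of_injective _ (fun a b h => by
            simpa using Finset.singleton_injective h)]
        omega
      have hsdcard : (U ∩ Q).card + (U \ Q).card = m := by
        rw [Finset.card_inter_add_card_sdiff, hU]
      have hEle : E.card ≤ (P.filter (fun s => ¬ Disjoint s K)).card :=
        Finset.card_le_card hEsub
      have hCovle : Cov.card ≤ (P.filter (fun s => Disjoint s K)).card + pieces.card :=
        Finset.card_union_le _ _
      have htUm : (U ∩ Q).card ≤ m := hU ▸ Finset.card_le_card (Finset.inter_subset_left)
      omega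
    have h1 := cover_transfer T B Cov hCovsub hCovpath hCovcov
    omega
  exact le_antisymm hupper hlower
end
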